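/- As ℓ → ∞, the squared L²(B₁)-norm of the spherical-wave radial factor satisfies ∫₀¹ j_ℓ(κr)² r² dr ~ (1/16)·(eκ/2)^{2ℓ}·ℓ^{-2(ℓ+3/2)}, where j_ℓ is the spherical Bessel function and κ > 0 is fixed. -/

import Mathlib

/-!
Successive coefficients of the power series of `j_ℓ` shrink by a factor of at most
`1 / (2 (2ℓ + 3))`, so for `x² ≤ κ² ≤ 2ℓ + 3` the series is its first term
`2^ℓ ℓ! / (2ℓ + 1)! · x^ℓ` up to a relative error `κ² / (2ℓ + 3)`. Squaring and integrating,
`∫₀¹ j_ℓ(κr)² r² dr = (1 + o(1)) (2^ℓ ℓ! κ^ℓ / (2ℓ + 1)!)² / (2ℓ + 3)`, and Stirling's formula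
for `ℓ!` and `(2ℓ)!` turns the right-hand side into the stated asymptotics.
-/

open Filter

/-- The spherical Bessel function of the first kind `j_ℓ`. -/
noncomputable def sphericalBessel (ℓ : ℕ) (x : ℝ) : ℝ :=
  2 ^ ℓ * ∑' k : ℕ, (-1 : ℝ) ^ k * (Nat.factorial (ℓ + k) : ℝ) /
    ((Nat.factorial k : ℝ) * (Nat.factorial (2 * ℓ + 2 * k + 1) : ℝ)) * x ^ (2 * k + ℓ)

open Real Nat

lemma norm_tsum_sub_zero_le_of_geometric {E : Type*} [NormedAddCommGroup E] [CompleteSpace E]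
    {f : ℕ → E} {A q : ℝ} (hq0 : 0 ≤ q) (hq : q ≤ 1 / 2) (hf : ∀ k, ‖f k‖ ≤ A * q ^ k) :
    ‖∑' k, f k - f 0‖ ≤ 2 * A * q := by
  have hq1 : q < 1 := by linarith
  have hA : 0 ≤ A := by simpa using (norm_nonneg _).trans (hf 0)
  have hsum : Summable f :=
    .of_norm_bounded ((summable_geometric_of_lt_one hq0 hq1).mul_left A) hf
  rw [hsum.tsum_eq_zero_add, add_sub_cancel_left]
  calc ‖∑' k, f (k + 1)‖ ≤ A * q * (1 - q)⁻¹ :=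
        tsum_of_norm_bounded ((hasSum_geometric_of_lt_one hq0 hq1).mul_left (A * q))
          fun k => (hf (k + 1)).trans_eq (by ring)
    _ ≤ A * q * 2 := by
        gcongr
        rw [inv_le_comm₀ (by linarith) two_pos]
        linarith
    _ = 2 * A * q := by ring

lemma sq_bounds_of_abs_sub_le {a b δ : ℝ} (ha : 0 ≤ a) (hδ : δ ≤ 1) (h : |b - a| ≤ δ * a) :
    ((1 - δ) * a) ^ 2 ≤ b ^ 2 ∧ b ^ 2 ≤ ((1 + δ) * a) ^ 2 := by
  rw [abs_le] at h
  constructor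
  · exact pow_le_pow_left₀ (by nlinarith) (by linarith) 2
  · exact sq_le_sq' (by nlinarith) (by linarith)

noncomputable def sphericalBesselCoeff (ℓ k : ℕ) : ℝ :=
  (ℓ + k)! / (k ! * (2 * ℓ + 2 * k + 1)! : ℝ)

lemma sphericalBessel_eq_tsum (ℓ : ℕ) (x : ℝ) :
    sphericalBessel ℓ x =
      2 ^ ℓ * ∑' k, (-1) ^ k * sphericalBesselCoeff ℓ k * x ^ (2 * k + ℓ) := by
  simp only [sphericalBessel, sphericalBesselCoeff, mul_div_assoc]

lemma sphericalBesselCoeff_zero (ℓ : ℕ) :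
    sphericalBesselCoeff ℓ 0 = ℓ ! / (2 * ℓ + 1)! := by
  simp [sphericalBesselCoeff]

lemma sphericalBesselCoeff_nonneg (ℓ k : ℕ) : 0 ≤ sphericalBesselCoeff ℓ k := by
  unfold sphericalBesselCoeff; positivity

lemma sphericalBesselCoeff_succ (ℓ k : ℕ) :
    sphericalBesselCoeff ℓ (k + 1) =
      sphericalBesselCoeff ℓ k / (2 * (k + 1) * (2 * ℓ + 2 * k + 3)) := by
  have h : 2 * ℓ + 2 * (k + 1) + 1 = (2 * ℓ + 2 * k + 1 + 1) + 1 := by ring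
  simp only [sphericalBesselCoeff, h, ← add_assoc, Nat.factorial_succ]
  push_cast
  field_simp
  ring

lemma sphericalBesselCoeff_le (ℓ k : ℕ) :
    sphericalBesselCoeff ℓ k ≤
      sphericalBesselCoeff ℓ 0 * (2 * (2 * ℓ + 3) : ℝ)⁻¹ ^ k / k ! := by
  induction k with
  | zero => simp
  | succ k ih =>
    rw [sphericalBesselCoeff_succ, Nat.factorial_succ, pow_succ]
    push_cast
    calc sphericalBesselCoeff ℓ k / (2 * (k + 1) * (2 * ℓ + 2 * k + 3))
        ≤ sphericalBesselCoeff ℓ 0 * (2 * (2 * ℓ + 3) : ℝ)⁻¹ ^ k / k ! /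
            ((k + 1) * (2 * (2 * ℓ + 3))) := by
          refine div_le_div₀ ((sphericalBesselCoeff_nonneg ℓ k).trans ih) ih (by positivity) ?_
          nlinarith [(k.cast_nonneg : (0 : ℝ) ≤ k), (ℓ.cast_nonneg : (0 : ℝ) ≤ ℓ)]
      _ = _ := by field_simp

lemma abs_sphericalBesselTerm_le (ℓ k : ℕ) (x : ℝ) :
    |(-1) ^ k * sphericalBesselCoeff ℓ k * x ^ (2 * k + ℓ)| ≤
      sphericalBesselCoeff ℓ 0 * |x| ^ ℓ * (x ^ 2 / (2 * (2 * ℓ + 3))) ^ k / k ! := by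
  rw [abs_mul, abs_mul, abs_pow, abs_neg, abs_one, one_pow, one_mul,
    abs_of_nonneg (sphericalBesselCoeff_nonneg ℓ k), abs_pow, pow_add, pow_mul, sq_abs]
  calc sphericalBesselCoeff ℓ k * ((x ^ 2) ^ k * |x| ^ ℓ)
      ≤ sphericalBesselCoeff ℓ 0 * (2 * (2 * ℓ + 3) : ℝ)⁻¹ ^ k / k ! *
          ((x ^ 2) ^ k * |x| ^ ℓ) := by
        gcongr
        exact sphericalBesselCoeff_le ℓ k
    _ = _ := by rw [div_pow]; ring

@[fun_prop]
lemma continuous_sphericalBessel (ℓ : ℕ) : Continuous (sphericalBessel ℓ) := by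
  simp only [funext (sphericalBessel_eq_tsum ℓ)]
  refine continuous_const.mul (continuous_iff_continuousAt.2 fun x => ?_)
  set R := |x| + 1
  have hR : ContinuousOn
      (fun y : ℝ => ∑' k, (-1) ^ k * sphericalBesselCoeff ℓ k * y ^ (2 * k + ℓ))
      (Set.Icc (-R) R) := by
    refine continuousOn_tsum (fun k => by fun_prop)
      ((Real.summable_pow_div_factorial (R ^ 2 / (2 * (2 * ℓ + 3)))).mul_left
        (sphericalBesselCoeff ℓ 0 * R ^ ℓ)) fun k y hy => ?_
    have hyR : |y| ≤ R := abs_le.2 hy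
    calc ‖(-1) ^ k * sphericalBesselCoeff ℓ k * y ^ (2 * k + ℓ)‖
        ≤ sphericalBesselCoeff ℓ 0 * |y| ^ ℓ * (y ^ 2 / (2 * (2 * ℓ + 3))) ^ k / k ! :=
          abs_sphericalBesselTerm_le ℓ k y
      _ ≤ sphericalBesselCoeff ℓ 0 * R ^ ℓ * (R ^ 2 / (2 * (2 * ℓ + 3))) ^ k / k ! := by
          have := sphericalBesselCoeff_nonneg ℓ 0
          rw [← sq_abs y]
          gcongr
      _ = _ := by ring
  exact hR.continuousAt (Icc_mem_nhds (by linarith [neg_abs_le x]) (by linarith [le_abs_self x]))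

lemma abs_sphericalBessel_sub_le (ℓ : ℕ) {x : ℝ} (hx : x ^ 2 ≤ 2 * ℓ + 3) :
    |sphericalBessel ℓ x - 2 ^ ℓ * sphericalBesselCoeff ℓ 0 * x ^ ℓ| ≤
      x ^ 2 / (2 * ℓ + 3) * (2 ^ ℓ * sphericalBesselCoeff ℓ 0 * |x| ^ ℓ) := by
  have htail := norm_tsum_sub_zero_le_of_geometric
    (f := fun k => (-1) ^ k * sphericalBesselCoeff ℓ k * x ^ (2 * k + ℓ))
    (by positivity) (by rw [div_le_iff₀ (by positivity)]; linarith)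
    fun k => (abs_sphericalBesselTerm_le ℓ k x).trans
      (div_le_self (by have := sphericalBesselCoeff_nonneg ℓ 0; positivity)
        (by exact_mod_cast k.factorial_pos))
  rw [sphericalBessel_eq_tsum, show 2 ^ ℓ * sphericalBesselCoeff ℓ 0 * x ^ ℓ =
    2 ^ ℓ * ((-1) ^ 0 * sphericalBesselCoeff ℓ 0 * x ^ (2 * 0 + ℓ)) by ring, ← mul_sub,
    abs_mul, abs_of_pos (by positivity)]
  calc 2 ^ ℓ * |_| ≤ 2 ^ ℓ * (2 * (sphericalBesselCoeff ℓ 0 * |x| ^ ℓ) *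
      (x ^ 2 / (2 * (2 * ℓ + 3)))) := by gcongr; exact htail
    _ = _ := by field_simp

lemma sq_sphericalBessel_bounds {κ x : ℝ} {ℓ : ℕ} (hx : 0 ≤ x) (hxκ : x ^ 2 ≤ κ ^ 2)
    (hℓ : κ ^ 2 ≤ 2 * ℓ + 3) :
    ((1 - κ ^ 2 / (2 * ℓ + 3)) * (2 ^ ℓ * sphericalBesselCoeff ℓ 0 * x ^ ℓ)) ^ 2 ≤
        sphericalBessel ℓ x ^ 2 ∧
      sphericalBessel ℓ x ^ 2 ≤
        ((1 + κ ^ 2 / (2 * ℓ + 3)) * (2 ^ ℓ * sphericalBesselCoeff ℓ 0 * x ^ ℓ)) ^ 2 := by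
  have hc := sphericalBesselCoeff_nonneg ℓ 0
  refine sq_bounds_of_abs_sub_le (by positivity) ((div_le_one (by positivity)).2 hℓ) ?_
  calc |sphericalBessel ℓ x - 2 ^ ℓ * sphericalBesselCoeff ℓ 0 * x ^ ℓ|
      ≤ x ^ 2 / (2 * ℓ + 3) * (2 ^ ℓ * sphericalBesselCoeff ℓ 0 * |x| ^ ℓ) :=
        abs_sphericalBessel_sub_le ℓ (hxκ.trans hℓ)
    _ ≤ _ := by
        rw [abs_of_nonneg hx]
        gcongr

lemma integral_mul_pow_sq_mul_sq (c κ : ℝ) (ℓ : ℕ) :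
    ∫ r in (0 : ℝ)..1, (c * (κ * r) ^ ℓ) ^ 2 * r ^ 2 = (c * κ ^ ℓ) ^ 2 / (2 * ℓ + 3) := by
  simp_rw [show ∀ r : ℝ, (c * (κ * r) ^ ℓ) ^ 2 * r ^ 2 = (c * κ ^ ℓ) ^ 2 * r ^ (2 * ℓ + 2) by
    intro r; ring]
  rw [intervalIntegral.integral_const_mul, integral_pow]
  push_cast
  ring

/-- The value of `∫₀¹ (2^ℓ · sphericalBesselCoeff ℓ 0 · (κr)^ℓ)² r² dr`, the integral with `j_ℓ`
replaced by the leading term of its series. -/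
noncomputable def sphericalBesselLeadingIntegral (κ : ℝ) (ℓ : ℕ) : ℝ :=
  (2 ^ ℓ * sphericalBesselCoeff ℓ 0 * κ ^ ℓ) ^ 2 / (2 * ℓ + 3)

lemma sphericalBesselLeadingIntegral_pos {κ : ℝ} (hκ : κ ≠ 0) (ℓ : ℕ) :
    0 < sphericalBesselLeadingIntegral κ ℓ := by
  rw [sphericalBesselLeadingIntegral, sphericalBesselCoeff_zero]
  positivity

lemma integral_sphericalBessel_sq_mem_Icc {κ : ℝ} (hκ : 0 ≤ κ) {ℓ : ℕ}
    (hℓ : κ ^ 2 ≤ 2 * ℓ + 3) :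
    ∫ r in (0 : ℝ)..1, sphericalBessel ℓ (κ * r) ^ 2 * r ^ 2 ∈
      Set.Icc ((1 - κ ^ 2 / (2 * ℓ + 3)) ^ 2 * sphericalBesselLeadingIntegral κ ℓ)
        ((1 + κ ^ 2 / (2 * ℓ + 3)) ^ 2 * sphericalBesselLeadingIntegral κ ℓ) := by
  have hpoint (r : ℝ) (hr : r ∈ Set.Icc (0 : ℝ) 1) :=
    sq_sphericalBessel_bounds (ℓ := ℓ) (mul_nonneg hκ hr.1) (by
      rw [mul_pow]; exact mul_le_of_le_one_right (sq_nonneg κ) (pow_le_one₀ hr.1 hr.2)) hℓ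
  have hlead (t : ℝ) : ∫ r in (0 : ℝ)..1,
      (t * (2 ^ ℓ * sphericalBesselCoeff ℓ 0 * (κ * r) ^ ℓ)) ^ 2 * r ^ 2 =
        t ^ 2 * sphericalBesselLeadingIntegral κ ℓ := by
    simp_rw [← mul_assoc t, integral_mul_pow_sq_mul_sq, sphericalBesselLeadingIntegral]
    ring
  have hintegrable (f : ℝ → ℝ) (hf : Continuous f) :
      IntervalIntegrable (fun r => f r ^ 2 * r ^ 2) MeasureTheory.volume 0 1 :=
    (by fun_prop : Continuous fun r => f r ^ 2 * r ^ 2).intervalIntegrable 0 1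
  constructor
  · rw [← hlead]
    exact intervalIntegral.integral_mono_on zero_le_one (hintegrable _ (by fun_prop))
      (hintegrable _ (by fun_prop))
      fun r hr => mul_le_mul_of_nonneg_right (hpoint r hr).1 (sq_nonneg r)
  · rw [← hlead]
    exact intervalIntegral.integral_mono_on zero_le_one (hintegrable _ (by fun_prop))
      (hintegrable _ (by fun_prop))
      fun r hr => mul_le_mul_of_nonneg_right (hpoint r hr).2 (sq_nonneg r)

lemma tendsto_integral_sphericalBessel_sq_div_leadingIntegral {κ : ℝ} (hκ : 0 < κ) :
    Tendsto (fun ℓ : ℕ => (∫ r in (0 : ℝ)..1, sphericalBessel ℓ (κ * r) ^ 2 * r ^ 2) /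
      sphericalBesselLeadingIntegral κ ℓ) atTop (nhds 1) := by
  have hδ : Tendsto (fun ℓ : ℕ => κ ^ 2 / (2 * ℓ + 3)) atTop (nhds 0) :=
    tendsto_const_nhds.div_atTop <| tendsto_atTop_add_const_right _ _ <|
      tendsto_natCast_atTop_atTop.const_mul_atTop two_pos
  have hlow := ((tendsto_const_nhds (x := (1 : ℝ))).sub hδ).pow 2
  have hup := ((tendsto_const_nhds (x := (1 : ℝ))).add hδ).pow 2
  simp only [sub_zero, add_zero, one_pow] at hlow hup
  obtain ⟨N, hN⟩ := exists_nat_ge (κ ^ 2)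
  have hbounds : ∀ᶠ ℓ : ℕ in atTop, _ := (eventually_ge_atTop N).mono fun ℓ hℓ =>
    integral_sphericalBessel_sq_mem_Icc hκ.le (ℓ := ℓ)
      (by linarith [(Nat.cast_le (α := ℝ)).2 hℓ])
  have hpos := sphericalBesselLeadingIntegral_pos hκ.ne'
  refine tendsto_of_tendsto_of_tendsto_of_le_of_le' hlow hup ?_ ?_ <;>
    filter_upwards [hbounds] with ℓ h
  · exact (le_div_iff₀ (hpos ℓ)).2 h.1
  · exact (div_le_iff₀ (hpos ℓ)).2 h.2

lemma stirlingSeq_sq (n : ℕ) :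
    Stirling.stirlingSeq n ^ 2 = n ! ^ 2 / (2 * n * (n / exp 1) ^ (2 * n)) := by
  rw [Stirling.stirlingSeq, div_pow, mul_pow, sq_sqrt (by positivity), ← pow_mul, mul_comm n 2]

lemma sphericalBesselLeadingIntegral_div_eq {κ : ℝ} (hκ : κ ≠ 0) {ℓ : ℕ} (hℓ : ℓ ≠ 0) :
    sphericalBesselLeadingIntegral κ ℓ /
        ((1 / 16) * (exp 1 * κ / 2) ^ (2 * ℓ) * (ℓ : ℝ) ^ (-(2 * ((ℓ : ℝ) + 3 / 2)))) =
      (Stirling.stirlingSeq ℓ / Stirling.stirlingSeq (2 * ℓ)) ^ 2 *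
        ((2 * ℓ : ℝ) / (2 * ℓ + 1)) ^ 2 * ((2 * ℓ : ℝ) / (2 * ℓ + 3)) := by
  have hℓ' : (0 : ℝ) < ℓ := by positivity
  rw [show -(2 * ((ℓ : ℝ) + 3 / 2)) = -((2 * ℓ + 3 : ℕ) : ℝ) by push_cast; ring,
    rpow_neg hℓ'.le, rpow_natCast, div_pow (Stirling.stirlingSeq ℓ), stirlingSeq_sq,
    stirlingSeq_sq, sphericalBesselLeadingIntegral, sphericalBesselCoeff_zero,
    Nat.factorial_succ]
  push_cast
  simp only [div_pow, mul_pow, ← pow_mul]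
  field_simp
  ring

lemma tendsto_sphericalBesselLeadingIntegral_div {κ : ℝ} (hκ : κ ≠ 0) :
    Tendsto (fun ℓ : ℕ => sphericalBesselLeadingIntegral κ ℓ /
        ((1 / 16) * (exp 1 * κ / 2) ^ (2 * ℓ) * (ℓ : ℝ) ^ (-(2 * ((ℓ : ℝ) + 3 / 2)))))
      atTop (nhds 1) := by
  have h2 : Tendsto (fun ℓ : ℕ => 2 * ℓ) atTop atTop := tendsto_id.const_mul_atTop' two_pos
  have hstirling : Tendsto (fun ℓ : ℕ => Stirling.stirlingSeq ℓ / Stirling.stirlingSeq (2 * ℓ))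
      atTop (nhds 1) := by
    simpa [Function.comp_def, Pi.div_def, div_self (sqrt_pos.2 pi_pos).ne'] using
      Stirling.tendsto_stirlingSeq_sqrt_pi.div (Stirling.tendsto_stirlingSeq_sqrt_pi.comp h2)
        (sqrt_pos.2 pi_pos).ne'
  have hrational (a : ℝ) : Tendsto (fun ℓ : ℕ => (2 * ℓ : ℝ) / (2 * ℓ + a)) atTop (nhds 1) := by
    simpa [Function.comp_def] using (tendsto_natCast_div_add_atTop a).comp h2
  refine ((hstirling.pow 2).mul ((hrational 1).pow 2) |>.mul (hrational 3)).congr' ?_ |>.trans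
    (by simp)
  filter_upwards [eventually_ne_atTop 0] with ℓ hℓ
  exact (sphericalBesselLeadingIntegral_div_eq hκ hℓ).symm

theorem spherical_bessel_L2_asymptotics (κ : ℝ) (hκ : 0 < κ) :
    Tendsto (fun ℓ : ℕ =>
        (∫ r in (0:ℝ)..1, (sphericalBessel ℓ (κ * r)) ^ 2 * r ^ 2) /
          ((1 / 16) * (Real.exp 1 * κ / 2) ^ (2 * ℓ) *
            (ℓ : ℝ) ^ (-(2 * ((ℓ : ℝ) + 3 / 2)))))
      atTop (nhds 1) := by
  have h := (tendsto_integral_sphericalBessel_sq_div_leadingIntegral hκ).mul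
    (tendsto_sphericalBesselLeadingIntegral_div hκ.ne')
  rw [one_mul] at h
  refine h.congr fun ℓ => ?_
  rw [div_mul_div_cancel₀ (sphericalBesselLeadingIntegral_pos hκ.ne' ℓ).ne']
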